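/- arXiv:1407.2032 — 5 statements merged into one kernel-verified Lean document; each statement's English description precedes it below -/
import Mathlib

section
/- Let p be an odd prime and m, k positive integers with v₂(k) < v₂(m). If p^k ≡ 1 (mod 4), then the number of pairs (x,y) ∈ F_{p^m}² satisfying both x² + y² = 0 and x^{p^k+1} + y^{p^k+1} = 0 equals 2p^m − 1. -/
/-!
Since `v₂(m) > v₂(k) ≥ 0`, `m` is even, so `p ^ m ≡ 1 (mod 4)` and `-1 = i ^ 2` is a square in
`F`. Then `x² + y² = (x - i y)(x + i y)`, so the first equation cuts out the two lines
`x = ± i y`, which meet only at the origin: `2 p ^ m - 1` points. On this set the second equation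
holds automatically: `n = p ^ k + 1 ≡ 2 (mod 4)`, and `x² = -y²` gives `x ^ n = (-1) ^ (n / 2) y ^ n
= -y ^ n`.
-/

theorem Nat.pow_mod_four_eq_one_of_even {p m : ℕ} (hp : Odd p) (hm : Even m) :
    p ^ m % 4 = 1 := by
  obtain ⟨r, rfl⟩ := hm
  obtain ⟨s, hs⟩ := hp.pow (n := r)
  rw [← two_mul, pow_mul', hs]
  ring_nf
  omega

theorem pow_add_pow_eq_zero_of_sq_add_sq_eq_zero {R : Type*} [CommRing R] {x y : R}
    (h : x ^ 2 + y ^ 2 = 0) {n : ℕ} (hn : n % 4 = 2) : x ^ n + y ^ n = 0 := by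
  obtain ⟨j, rfl⟩ : ∃ j, n = 2 * (2 * j + 1) := ⟨n / 4, by omega⟩
  rw [pow_mul, pow_mul, eq_neg_of_add_eq_zero_left h, (odd_two_mul_add_one j).neg_pow,
    neg_add_cancel]

theorem sq_add_sq_eq_zero_iff {R : Type*} [CommRing R] [NoZeroDivisors R] {i : R}
    (hi : i ^ 2 = -1) {x y : R} : x ^ 2 + y ^ 2 = 0 ↔ x = i * y ∨ x = -i * y := by
  have hfactor : x ^ 2 + y ^ 2 = (x - i * y) * (x - -i * y) := by
    linear_combination y ^ 2 * hi
  rw [hfactor, mul_eq_zero, sub_eq_zero, sub_eq_zero]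

theorem card_eq_mul_or_eq_mul {F : Type*} [Field F] [Fintype F] {a b : F} (hab : a ≠ b) :
    Nat.card {xy : F × F // xy.1 = a * xy.2 ∨ xy.1 = b * xy.2} = 2 * Fintype.card F - 1 := by
  let line (c : F) : Set (F × F) := Set.range fun y => (c * y, y)
  have hline : ∀ c, (line c).ncard = Fintype.card F := fun c => by
    rw [Set.ncard_range_of_injective (fun y y' h => (Prod.mk.inj h).2), Nat.card_eq_fintype_card]
  have hunion : {xy : F × F | xy.1 = a * xy.2 ∨ xy.1 = b * xy.2} = line a ∪ line b := by
    ext ⟨x, y⟩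
    simp [line, eq_comm]
  have hinter : line a ∩ line b = {0} := by
    ext ⟨x, y⟩
    simp only [line, Set.mem_inter_iff, Set.mem_range, Prod.mk.injEq, Set.mem_singleton_iff,
      Prod.mk_eq_zero]
    constructor
    · rintro ⟨⟨t, rfl, rfl⟩, ⟨t', ht', rfl⟩⟩
      have ht : t' = 0 := by
        by_contra ht
        exact hab (mul_right_cancel₀ ht ht'.symm)
      simp [ht]
    · rintro ⟨rfl, rfl⟩
      exact ⟨⟨0, by simp⟩, ⟨0, by simp⟩⟩
  have hsum := Set.ncard_union_add_ncard_inter (line a) (line b)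
  rw [hinter, Set.ncard_singleton, hline, hline] at hsum
  calc Nat.card {xy : F × F // xy.1 = a * xy.2 ∨ xy.1 = b * xy.2}
      = (line a ∪ line b).ncard := by rw [← hunion]; exact Nat.card_coe_set_eq _
    _ = 2 * Fintype.card F - 1 := by omega

theorem stmt_2_general (p m k : ℕ) (hpo : Odd p)
    (hv : padicValNat 2 k < padicValNat 2 m) (hmod : p ^ k % 4 = 1)
    (F : Type*) [Field F] [Fintype F] (hF : Fintype.card F = p ^ m) :
    Nat.card {xy : F × F //
        xy.1 ^ 2 + xy.2 ^ 2 = 0 ∧ xy.1 ^ (p ^ k + 1) + xy.2 ^ (p ^ k + 1) = 0} =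
      2 * p ^ m - 1 := by
  have hm : Even m := even_iff_two_dvd.mpr (dvd_of_one_le_padicValNat (by omega))
  have hcard : Fintype.card F % 4 = 1 := hF ▸ Nat.pow_mod_four_eq_one_of_even hpo hm
  obtain ⟨i, hi⟩ := FiniteField.isSquare_neg_one_iff.mpr (by omega : Fintype.card F % 4 ≠ 3)
  have hi2 : i ^ 2 = -1 := by rw [hi, sq]
  have hchar : ringChar F ≠ 2 := fun h => by
    have := FiniteField.even_card_of_char_two h
    omega
  have hi_ne : i ≠ -i := fun h => by
    have : (2 : F) * i = 0 := by linear_combination h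
    rcases mul_eq_zero.mp this with h2 | h0
    · exact Ring.two_ne_zero hchar h2
    · simp [h0] at hi2
  rw [← hF, ← card_eq_mul_or_eq_mul hi_ne]
  refine Nat.card_congr (Equiv.subtypeEquivRight fun xy => ?_)
  rw [and_iff_left_of_imp fun h => pow_add_pow_eq_zero_of_sq_add_sq_eq_zero h (by omega),
    sq_add_sq_eq_zero_iff hi2]

theorem stmt_2 (p m k : ℕ) (hp : p.Prime) (hpo : Odd p) (hm : 0 < m) (hk : 0 < k)
    (hv : padicValNat 2 k < padicValNat 2 m) (hmod : p ^ k % 4 = 1)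
    (F : Type*) [Field F] [Fintype F] (hF : Fintype.card F = p ^ m) :
    Nat.card {xy : F × F //
        xy.1 ^ 2 + xy.2 ^ 2 = 0 ∧ xy.1 ^ (p ^ k + 1) + xy.2 ^ (p ^ k + 1) = 0} =
      2 * p ^ m - 1 :=
  stmt_2_general p m k hpo hv hmod F hF
end

section
/- Let p be an odd prime and m, k positive integers with v₂(k) < v₂(m), and let π be a primitive element of F_{p^m}. If p^k ≡ 1 (mod 4), then the number of triples (x,y,z) ∈ F_{p^m}³ satisfying both x² + y² − πz² = 0 and x^{p^k+1} + y^{p^k+1} + π^{(p^k+1)/2} z^{p^k+1} = 0 equals 2p^m − 1. -/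
/-!
Write `s = p ^ k`, `q = p ^ m`. On a common zero, Frobenius turns the quadric into
`x^(2s) + y^(2s) = π^s z^(2s)`, and then Lagrange's identity
`(x y^s - x^s y)^2 = (x^2 + y^2)(x^(2s) + y^(2s)) - (x^(s+1) + y^(s+1))^2` shows `x y^s = x^s y`.
If `z ≠ 0` this gives `π = ((x/y)^2 + 1) (y/z)^2` (or `π = (x/z)^2` when `y = 0`) with
`(x/y)^2 + 1` fixed by `t ↦ t^s`. Such a fixed element has order dividing
`gcd(s - 1, q - 1) = p^gcd(k,m) - 1`, and `v₂(k) < v₂(m)` makes `m / gcd(k,m)` even, so this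
divides `(q - 1)/2` and the element is a square; a primitive element is not. Hence `z = 0`, and
the solutions are the two lines `x = ± i y` (`i^2 = -1`), which meet only at the origin.
-/

theorem Nat.two_mul_gcd_dvd_of_padicValNat_lt {k m : ℕ} (hk : k ≠ 0)
    (hv : padicValNat 2 k < padicValNat 2 m) : 2 * Nat.gcd k m ∣ m := by
  have hm : m ≠ 0 := by rintro rfl; simp at hv
  obtain ⟨e, he⟩ := Nat.gcd_dvd_right k m
  have hd : Nat.gcd k m ≠ 0 := Nat.gcd_ne_zero_right hm
  have he0 : e ≠ 0 := by rintro rfl; simp [hm] at he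
  have hdk : padicValNat 2 (Nat.gcd k m) ≤ padicValNat 2 k :=
    (padicValNat_dvd_iff_le hk).1 ((pow_padicValNat_dvd).trans (Nat.gcd_dvd_left k m))
  have he2 : 2 ∣ e := by
    apply dvd_of_one_le_padicValNat
    rw [he, padicValNat.mul hd he0] at hv
    omega
  calc 2 * Nat.gcd k m ∣ Nat.gcd k m * e := by
        rw [mul_comm 2]; exact mul_dvd_mul_left _ he2
    _ = m := he.symm

theorem Nat.two_mul_gcd_pow_sub_one_dvd {p k m : ℕ} (hp : Odd p) (hk : k ≠ 0)
    (hv : padicValNat 2 k < padicValNat 2 m) :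
    2 * Nat.gcd (p ^ k - 1) (p ^ m - 1) ∣ p ^ m - 1 := by
  rw [Nat.pow_sub_one_gcd_pow_sub_one]
  set d := Nat.gcd k m
  obtain ⟨j, hj⟩ := Nat.two_mul_gcd_dvd_of_padicValNat_lt hk hv
  have hsq : p ^ (2 * d) - 1 = (p ^ d - 1) * (p ^ d + 1) := by
    zify [Nat.one_le_pow d _ hp.pos, Nat.one_le_pow (2 * d) _ hp.pos]
    ring
  calc 2 * (p ^ d - 1) ∣ p ^ (2 * d) - 1 := by
        rw [hsq, mul_comm 2]
        exact mul_dvd_mul_left _ (even_iff_two_dvd.1 (hp.pow.add_one))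
    _ ∣ p ^ m - 1 := by
        rw [hj, pow_mul p (2 * d)]
        exact Nat.sub_one_dvd_pow_sub_one _ _

theorem mul_pow_eq_pow_mul_of_sq_add_sq {R : Type*} [CommRing R] [NoZeroDivisors R]
    (p k : ℕ) [ExpChar R p] (hs : Odd (p ^ k)) {c x y z : R}
    (h₁ : x ^ 2 + y ^ 2 = c * z ^ 2)
    (h₂ : x ^ (p ^ k + 1) + y ^ (p ^ k + 1) + c ^ ((p ^ k + 1) / 2) * z ^ (p ^ k + 1) = 0) :
    x * y ^ p ^ k = x ^ p ^ k * y := by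
  set s := p ^ k
  have hfrob : (x ^ s) ^ 2 + (y ^ s) ^ 2 = c ^ s * (z ^ s) ^ 2 := by
    rw [← pow_right_comm, ← pow_right_comm y, ← add_pow_expChar_pow, h₁, mul_pow, pow_right_comm]
  have hc : (c ^ ((s + 1) / 2)) ^ 2 = c ^ s * c := by
    rw [← pow_mul, Nat.div_mul_cancel (even_iff_two_dvd.1 hs.add_one), pow_succ]
  have hsq : (x * y ^ s - x ^ s * y) ^ 2 = 0 := by
    linear_combination ((x ^ s) ^ 2 + (y ^ s) ^ 2) * h₁ + c * z ^ 2 * hfrob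
      - (x ^ s * x + y ^ s * y - c ^ ((s + 1) / 2) * (z ^ s * z)) * h₂ - (z ^ s * z) ^ 2 * hc
  exact sub_eq_zero.1 (pow_eq_zero_iff two_ne_zero |>.1 hsq)

theorem eq_zero_of_sq_add_sq_of_pow_add_pow {F : Type*} [Field F] (p k : ℕ) [ExpChar F p]
    (hs : Odd (p ^ k)) (hsq : ∀ t : F, t ^ p ^ k = t → IsSquare t) {c x y z : F}
    (hc : ¬IsSquare c) (h₁ : x ^ 2 + y ^ 2 = c * z ^ 2)
    (h₂ : x ^ (p ^ k + 1) + y ^ (p ^ k + 1) + c ^ ((p ^ k + 1) / 2) * z ^ (p ^ k + 1) = 0) :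
    z = 0 := by
  by_contra hz
  apply hc
  rcases eq_or_ne y 0 with rfl | hy
  · refine ⟨x / z, ?_⟩
    field_simp
    linear_combination -h₁
  have hxy := mul_pow_eq_pow_mul_of_sq_add_sq p k hs h₁ h₂
  set s := p ^ k
  have hu : (x / y) ^ s = x / y := by
    rw [div_pow, div_eq_div_iff (pow_ne_zero _ hy) hy]
    exact hxy.symm
  have ht : ((x / y) ^ 2 + 1) ^ s = (x / y) ^ 2 + 1 := by
    rw [add_pow_expChar_pow, one_pow, pow_right_comm, hu]
  have hc : c = ((x / y) ^ 2 + 1) * (y / z) ^ 2 := by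
    field_simp
    linear_combination -h₁
  rw [hc]
  exact (hsq _ ht).mul (IsSquare.sq _)

theorem pow_two_mul_add_pow_two_mul_eq_zero {R : Type*} [Ring R] {n : ℕ} (hn : Odd n) {x y : R}
    (h : x ^ 2 + y ^ 2 = 0) : x ^ (2 * n) + y ^ (2 * n) = 0 := by
  rw [pow_mul, pow_mul, eq_neg_of_add_eq_zero_left h, hn.neg_pow, neg_add_cancel]

namespace FiniteField

variable {F : Type*} [Field F]

theorem isSquare_of_pow_eq_self [Fintype F] {p k m : ℕ} (hp : Odd p) (hk : k ≠ 0)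
    (hv : padicValNat 2 k < padicValNat 2 m) (hF : Fintype.card F = p ^ m) {t : F}
    (ht : t ^ p ^ k = t) : IsSquare t := by
  rcases eq_or_ne t 0 with rfl | ht0
  · exact IsSquare.zero
  have hodd : Odd (p ^ m) := hp.pow
  have hchar : ringChar F ≠ 2 := by
    rw [ne_eq, even_card_iff_char_two, hF, ← Nat.even_iff]
    exact Nat.not_even_iff_odd.2 hodd
  rw [isSquare_iff hchar ht0]
  have hs : t ^ (p ^ k - 1) = 1 := by
    refine mul_left_cancel₀ ht0 ?_
    rw [← pow_succ', Nat.sub_add_cancel (Nat.one_le_pow _ _ hp.pos), ht, mul_one]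
  have hq : t ^ (p ^ m - 1) = 1 := hF ▸ pow_card_sub_one_eq_one t ht0
  obtain ⟨c, hc⟩ := Nat.two_mul_gcd_pow_sub_one_dvd hp hk hv
  have hhalf : p ^ m / 2 = Nat.gcd (p ^ k - 1) (p ^ m - 1) * c := by
    have := Nat.odd_iff.1 hodd
    rw [mul_assoc] at hc
    omega
  rw [hF, hhalf, pow_mul, pow_gcd_eq_one.2 ⟨hs, hq⟩, one_pow]

theorem not_isSquare_of_forall_mem_zpowers [Finite F] (hF : ringChar F ≠ 2) {π : Fˣ}
    (hπ : ∀ x : Fˣ, x ∈ Subgroup.zpowers π) : ¬IsSquare (π : F) := by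
  rintro ⟨w, hw⟩
  obtain ⟨a, ha⟩ := exists_nonsquare hF
  apply ha
  rcases eq_or_ne a 0 with rfl | ha0
  · exact IsSquare.zero
  obtain ⟨n, hn⟩ := hπ (Units.mk0 a ha0)
  refine ⟨w ^ n, ?_⟩
  rw [← mul_zpow, ← hw, ← Units.val_zpow_eq_zpow_val, show π ^ n = Units.mk0 a ha0 from hn,
    Units.val_mk0]

theorem ncard_sq_add_sq_eq_zero [Finite F] (hF : ringChar F ≠ 2) (hi : IsSquare (-1 : F)) :
    {v : F × F | v.1 ^ 2 + v.2 ^ 2 = 0}.ncard = 2 * Nat.card F - 1 := by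
  obtain ⟨i, hi⟩ := hi
  have hi0 : i ≠ 0 := by rintro rfl; simp at hi
  have h2 : (2 : F) ≠ 0 := Ring.two_ne_zero hF
  have hlines : {v : F × F | v.1 ^ 2 + v.2 ^ 2 = 0} =
      Set.range (fun y : F => (i * y, y)) ∪ Set.range (fun y : F => (-(i * y), y)) := by
    ext ⟨x, y⟩
    have hfac : x ^ 2 + y ^ 2 = (x - i * y) * (x + i * y) := by linear_combination -y ^ 2 * hi
    simp [hfac, sub_eq_zero, add_eq_zero_iff_eq_neg, eq_comm]
  have hmeet : Set.range (fun y : F => (i * y, y)) ∩ Set.range (fun y : F => (-(i * y), y)) =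
      {(0, 0)} := by
    ext ⟨x, y⟩
    simp only [Set.mem_inter_iff, Set.mem_range, Prod.mk.injEq, Set.mem_singleton_iff]
    constructor
    · rintro ⟨⟨_, rfl, rfl⟩, ⟨y, hx, rfl⟩⟩
      have hy : 2 * i * y = 0 := by linear_combination -hx
      simp only [mul_eq_zero, h2, hi0, false_or] at hy
      simp [hy]
    · rintro ⟨rfl, rfl⟩
      exact ⟨⟨0, by simp⟩, ⟨0, by simp⟩⟩
  have hinj : ∀ f : F → F, Function.Injective (fun y : F => (f y, y)) :=
    fun _ _ _ h => congrArg Prod.snd h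
  have hcount := Set.ncard_union_add_ncard_inter (Set.range (fun y : F => (i * y, y)))
    (Set.range (fun y : F => (-(i * y), y)))
  rw [← hlines, hmeet, Set.ncard_singleton, Set.ncard_range_of_injective (hinj _),
    Set.ncard_range_of_injective (hinj _)] at hcount
  omega

end FiniteField

theorem sq_add_sq_and_pow_add_pow_iff {F : Type*} [Field F] (p k : ℕ) [ExpChar F p]
    (hs : p ^ k % 4 = 1) (hsq : ∀ t : F, t ^ p ^ k = t → IsSquare t) {c : F} (hc : ¬IsSquare c)
    (x y z : F) :
    (x ^ 2 + y ^ 2 - c * z ^ 2 = 0 ∧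
        x ^ (p ^ k + 1) + y ^ (p ^ k + 1) + c ^ ((p ^ k + 1) / 2) * z ^ (p ^ k + 1) = 0) ↔
      z = 0 ∧ x ^ 2 + y ^ 2 = 0 := by
  constructor
  · rintro ⟨h₁, h₂⟩
    obtain rfl := eq_zero_of_sq_add_sq_of_pow_add_pow p k (Nat.odd_iff.2 (by omega)) hsq hc
      (by linear_combination h₁) h₂
    simpa using h₁
  · rintro ⟨rfl, h⟩
    set n := (p ^ k + 1) / 2
    have hn : p ^ k + 1 = 2 * n := by omega
    refine ⟨by simp [h], ?_⟩
    rw [hn, zero_pow (by omega), mul_zero, add_zero]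
    exact pow_two_mul_add_pow_two_mul_eq_zero (Nat.odd_iff.2 (by omega)) h

theorem stmt_6_general (p m k : ℕ) (hp : p.Prime) (hpo : Odd p) (hk : 0 < k)
    (hv : padicValNat 2 k < padicValNat 2 m) (hmod : p ^ k % 4 = 1)
    (F : Type*) [Field F] [Fintype F] (hF : Fintype.card F = p ^ m)
    (π : Fˣ) (hπ : ∀ x : Fˣ, x ∈ Subgroup.zpowers π) :
    Nat.card {xyz : F × F × F //
        xyz.1 ^ 2 + xyz.2.1 ^ 2 - (π : F) * xyz.2.2 ^ 2 = 0 ∧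
        xyz.1 ^ (p ^ k + 1) + xyz.2.1 ^ (p ^ k + 1)
          + (π : F) ^ ((p ^ k + 1) / 2) * xyz.2.2 ^ (p ^ k + 1) = 0} =
      2 * p ^ m - 1 := by
  have := Fact.mk hp
  have : CharP F p := charP_of_card_eq_prime_pow hF
  have hchar : ringChar F ≠ 2 := by
    rw [ringChar.eq F p]
    rintro rfl
    exact Nat.not_odd_iff_even.2 even_two hpo
  have hi : IsSquare (-1 : F) := by
    rw [FiniteField.isSquare_neg_one_iff, hF]
    obtain ⟨j, rfl⟩ := (dvd_mul_right 2 _).trans (Nat.two_mul_gcd_dvd_of_padicValNat_lt hk.ne' hv)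
    obtain ⟨t, ht⟩ := hpo.pow (n := j)
    rw [pow_mul', ht]
    ring_nf
    omega
  have hsol := sq_add_sq_and_pow_add_pow_iff p k hmod
    (fun _ => FiniteField.isSquare_of_pow_eq_self hpo hk.ne' hv hF)
    (FiniteField.not_isSquare_of_forall_mem_zpowers hchar hπ)
  have hinj : Function.Injective (fun v : F × F => (v.1, v.2, (0 : F))) :=
    fun _ _ h => by simpa [Prod.ext_iff] using h
  calc _ = ((fun v : F × F => (v.1, v.2, (0 : F))) '' {v | v.1 ^ 2 + v.2 ^ 2 = 0}).ncard := by
        refine Nat.card_congr (Equiv.subtypeEquivRight fun ⟨x, y, z⟩ => ?_)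
        refine (hsol x y z).trans ?_
        simp [and_comm, eq_comm]
    _ = 2 * p ^ m - 1 := by
        rw [Set.ncard_image_of_injective _ hinj, FiniteField.ncard_sq_add_sq_eq_zero hchar hi,
          Nat.card_eq_fintype_card, hF]

theorem stmt_6 (p m k : ℕ) (hp : p.Prime) (hpo : Odd p) (hm : 0 < m) (hk : 0 < k)
    (hv : padicValNat 2 k < padicValNat 2 m) (hmod : p ^ k % 4 = 1)
    (F : Type*) [Field F] [Fintype F] (hF : Fintype.card F = p ^ m)
    (π : Fˣ) (hπ : ∀ x : Fˣ, x ∈ Subgroup.zpowers π) :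
    Nat.card {xyz : F × F × F //
        xyz.1 ^ 2 + xyz.2.1 ^ 2 - (π : F) * xyz.2.2 ^ 2 = 0 ∧
        xyz.1 ^ (p ^ k + 1) + xyz.2.1 ^ (p ^ k + 1)
          + (π : F) ^ ((p ^ k + 1) / 2) * xyz.2.2 ^ (p ^ k + 1) = 0} =
      2 * p ^ m - 1 :=
  stmt_6_general p m k hp hpo hk hv hmod F hF π hπ
end

section
/- Let p be an odd prime, m, k positive integers with 1 ≤ v₂(m) < v₂(k), d = gcd(m,k), and π a primitive element of F_{p^m}. Then the number of triples (x,y,z) with x ∈ F_{p^m}* and y,z ∈ F_{p^m} satisfying (x^{p^k−1}y − y^{p^k})² + (x^{p^k−1}z − z^{p^k})² = 0 equals p^d(2p^m − p^d)(p^m − 1). -/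
/-!
Dividing `y` and `z` by `x` turns the equation into `(a - a^q)^2 + (b - b^q)^2 = 0` with `q = p^k`,
independently of `x`. Since `m` and `k` are even, `-1` has a square root `i` in `F` and `q ≡ 1 mod 4`,
so `i^q = i`; hence the left side factors as `(u - u^q)(v - v^q)` with `u = a + ib`, `v = a - ib`.
The solutions of `u^q = u` are `0` and the `gcd(p^m - 1, p^k - 1) = p^d - 1` roots of unity of that
order in the cyclic group `Fˣ`, so there are `p^d` of them, and the pairs `(u, v)` with `u` or `v`
among them number `p^{2m} - (p^m - p^d)^2 = p^d (2p^m - p^d)`.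
-/

theorem setOf_pow_eq_self_eq_insert_ker {K : Type*} [Field K] {n : ℕ} (hn : 0 < n) :
    {x : K | x ^ n = x} = insert 0 (Units.val '' (powMonoidHom (n - 1) : Kˣ →* Kˣ).ker) := by
  ext x
  rcases eq_or_ne x 0 with rfl | hx
  · simp [hn.ne']
  · have hpow : x ^ n = x ↔ x ^ (n - 1) = 1 := by
      rw [← mul_eq_right₀ hx, ← pow_succ, Nat.sub_add_cancel hn]
    simp only [Set.mem_ofPred_eq, Set.mem_insert_iff, hx, false_or, hpow, Set.mem_image]
    constructor
    · intro h
      exact ⟨Units.mk0 x hx, Units.ext h, rfl⟩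
    · rintro ⟨u, hu, rfl⟩
      simpa using congrArg Units.val hu

theorem FiniteField.ncard_pow_eq_self {K : Type*} [Field K] [Finite K] {n : ℕ} (hn : 0 < n) :
    {x : K | x ^ n = x}.ncard = (Nat.card K - 1).gcd (n - 1) + 1 := by
  rw [setOf_pow_eq_self_eq_insert_ker hn, Set.ncard_insert_of_notMem,
    Set.ncard_image_of_injective _ Units.val_injective, ← Nat.card_coe_set_eq,
    SetLike.coe_sort_coe, IsCyclic.card_powMonoidHom_ker, Nat.card_units]
  rintro ⟨u, -, hu⟩
  exact u.ne_zero hu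

theorem FiniteField.ncard_pow_prime_pow_eq_self {K : Type*} [Field K] [Finite K] {p m : ℕ}
    (hp : 0 < p) (hK : Nat.card K = p ^ m) (k : ℕ) :
    {x : K | x ^ p ^ k = x}.ncard = p ^ m.gcd k := by
  rw [FiniteField.ncard_pow_eq_self (pow_pos hp k), hK, Nat.pow_sub_one_gcd_pow_sub_one,
    Nat.sub_add_cancel (Nat.one_le_pow _ _ hp)]

theorem Nat.pow_mod_four_eq_one_of_odd_of_even {p n : ℕ} (hp : Odd p) (hn : Even n) :
    p ^ n % 4 = 1 := by
  obtain ⟨j, rfl⟩ := hn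
  obtain ⟨r, rfl⟩ := hp
  rw [← two_mul, pow_mul, Nat.pow_mod, show (2 * r + 1) ^ 2 = 4 * (r * r + r) + 1 by ring]
  simp

theorem FiniteField.exists_sq_eq_neg_one_and_pow_eq_self {K : Type*} [Field K] [Fintype K]
    {p m k : ℕ} (hp : Odd p) (hK : Fintype.card K = p ^ m) (hm : Even m) (hk : Even k) :
    ∃ i : K, i ^ 2 = -1 ∧ i ^ p ^ k = i := by
  obtain ⟨i, hi⟩ := FiniteField.isSquare_neg_one_iff.mpr
    (by rw [hK, Nat.pow_mod_four_eq_one_of_odd_of_even hp hm]; decide)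
  have hi4 : i ^ 4 = 1 := by
    rw [show i ^ 4 = (i * i) ^ 2 by ring, ← hi]
    norm_num
  refine ⟨i, by rw [sq, hi], ?_⟩
  rw [pow_eq_pow_mod _ hi4, Nat.pow_mod_four_eq_one_of_odd_of_even hp hk, pow_one]

theorem Set.ncard_setOf_fst_mem_or_snd_mem {α : Type*} [Finite α] (s : Set α) :
    {uv : α × α | uv.1 ∈ s ∨ uv.2 ∈ s}.ncard = s.ncard * (2 * Nat.card α - s.ncard) := by
  have hcompl : {uv : α × α | uv.1 ∈ s ∨ uv.2 ∈ s}ᶜ = sᶜ ×ˢ sᶜ := by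
    ext; simp
  have htotal := Set.ncard_add_ncard_compl {uv : α × α | uv.1 ∈ s ∨ uv.2 ∈ s}
  rw [hcompl, Set.ncard_prod, Set.ncard_compl, Nat.card_prod] at htotal
  have hs : s.ncard ≤ Nat.card α := Set.ncard_le_card s
  zify [hs, (by omega : s.ncard ≤ 2 * Nat.card α)] at htotal ⊢
  linear_combination htotal

section AddMulSubMul

variable {K : Type*} [Field K] {i : K}

theorem AddMonoidHom.sq_add_sq_eq_map_add_mul_mul_map_sub_mul (hi : i ^ 2 = -1) (φ : K →+ K)
    (hφ : ∀ b, φ (i * b) = i * φ b) (a b : K) :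
    φ a ^ 2 + φ b ^ 2 = φ (a + i * b) * φ (a - i * b) := by
  rw [map_add, map_sub, hφ]
  linear_combination φ b ^ 2 * hi

def addMulSubMulEquiv (hi : i ^ 2 = -1) (h2 : (2 : K) ≠ 0) : K × K ≃ K × K where
  toFun ab := (ab.1 + i * ab.2, ab.1 - i * ab.2)
  invFun uv := ((uv.1 + uv.2) / 2, (uv.1 - uv.2) / (2 * i))
  left_inv := by
    have : i ≠ 0 := by rintro rfl; norm_num at hi
    rintro ⟨a, b⟩
    ext <;> field_simp <;> ring
  right_inv := by
    have : i ≠ 0 := by rintro rfl; norm_num at hi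
    rintro ⟨u, v⟩
    ext <;> field_simp <;> ring

theorem AddMonoidHom.ncard_setOf_sq_add_sq_eq_zero (hi : i ^ 2 = -1) (h2 : (2 : K) ≠ 0)
    (φ : K →+ K) (hφ : ∀ b, φ (i * b) = i * φ b) :
    {ab : K × K | φ ab.1 ^ 2 + φ ab.2 ^ 2 = 0}.ncard =
      {uv : K × K | φ uv.1 = 0 ∨ φ uv.2 = 0}.ncard := by
  let e := addMulSubMulEquiv hi h2
  have hpre : {ab : K × K | φ ab.1 ^ 2 + φ ab.2 ^ 2 = 0} =
      e ⁻¹' {uv | φ uv.1 = 0 ∨ φ uv.2 = 0} := by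
    ext ⟨a, b⟩
    simp [e, addMulSubMulEquiv, φ.sq_add_sq_eq_map_add_mul_mul_map_sub_mul hi hφ]
  rw [hpre, Set.ncard_preimage_of_injective_subset_range e.injective (by simp)]

end AddMulSubMul

theorem ncard_setOf_ne_zero_and_div_mem {K : Type*} [Field K] [Finite K] (S : Set (K × K)) :
    {t : K × K × K | t.1 ≠ 0 ∧ (t.2.1 / t.1, t.2.2 / t.1) ∈ S}.ncard =
      (Nat.card K - 1) * S.ncard := by
  let f : K × K × K → K × K × K := fun t => (t.1, t.1 * t.2.1, t.1 * t.2.2)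
  have himage : {t : K × K × K | t.1 ≠ 0 ∧ (t.2.1 / t.1, t.2.2 / t.1) ∈ S} =
      f '' ({0}ᶜ ×ˢ S) := by
    ext ⟨x, y, z⟩
    constructor
    · rintro ⟨hx, hS⟩
      exact ⟨(x, y / x, z / x), ⟨hx, hS⟩, by simp [f, mul_div_cancel₀ _ hx]⟩
    · rintro ⟨⟨x', a, b⟩, ⟨hx', hS⟩, hf⟩
      simp only [f, Prod.mk.injEq] at hf
      obtain ⟨rfl, rfl, rfl⟩ := hf
      simp_all
  have hinj : Set.InjOn f ({0}ᶜ ×ˢ S) := by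
    rintro ⟨x, a, b⟩ ⟨hx, -⟩ ⟨x', a', b'⟩ - hf
    simp only [f, Prod.mk.injEq] at hf
    obtain ⟨rfl, ha, hb⟩ := hf
    simp_all
  rw [himage, hinj.ncard_image, Set.ncard_prod, Set.ncard_compl, Set.ncard_singleton]

section SubPowCharPow

variable (K : Type*) [Field K] (p k : ℕ) [ExpChar K p]

def subPowCharPow : K →+ K :=
  AddMonoidHom.mk' (fun a => a - a ^ p ^ k) fun a b => by rw [add_pow_expChar_pow]; ring

variable {K p k}

theorem subPowCharPow_apply (a : K) : subPowCharPow K p k a = a - a ^ p ^ k := rfl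

theorem subPowCharPow_eq_zero_iff {a : K} : subPowCharPow K p k a = 0 ↔ a ^ p ^ k = a := by
  rw [subPowCharPow_apply, sub_eq_zero, eq_comm]

theorem subPowCharPow_mul_of_pow_eq_self {i : K} (hi : i ^ p ^ k = i) (b : K) :
    subPowCharPow K p k (i * b) = i * subPowCharPow K p k b := by
  rw [subPowCharPow_apply, subPowCharPow_apply, mul_pow, hi, mul_sub]

end SubPowCharPow

theorem pow_pred_mul_sub_pow {K : Type*} [Field K] {x : K} (hx : x ≠ 0) {q : ℕ} (hq : 0 < q)
    (y : K) : x ^ (q - 1) * y - y ^ q = x ^ q * (y / x - (y / x) ^ q) := by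
  have hxq : x ^ q = x ^ (q - 1) * x := by rw [← pow_succ, Nat.sub_add_cancel hq]
  rw [div_pow, mul_sub, mul_div_cancel₀ _ (pow_ne_zero q hx), hxq, mul_assoc,
    mul_div_cancel₀ _ hx]

theorem setOf_sq_add_sq_eq_zero_eq_div_mem {K : Type*} [Field K] {q : ℕ} (hq : 0 < q) :
    {t : K × K × K | t.1 ≠ 0 ∧
        (t.1 ^ (q - 1) * t.2.1 - t.2.1 ^ q) ^ 2 + (t.1 ^ (q - 1) * t.2.2 - t.2.2 ^ q) ^ 2 = 0} =
      {t | t.1 ≠ 0 ∧ (t.2.1 / t.1, t.2.2 / t.1) ∈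
        {ab : K × K | (ab.1 - ab.1 ^ q) ^ 2 + (ab.2 - ab.2 ^ q) ^ 2 = 0}} := by
  ext ⟨x, y, z⟩
  simp only [Set.mem_ofPred_eq]
  refine and_congr_right fun hx => ?_
  rw [pow_pred_mul_sub_pow hx hq, pow_pred_mul_sub_pow hx hq, mul_pow, mul_pow, ← mul_add,
    mul_eq_zero, or_iff_right (pow_ne_zero _ (pow_ne_zero _ hx))]

theorem stmt_9_general (p m k : ℕ) (hp : p.Prime) (hpo : Odd p)
    (hv1 : 1 ≤ padicValNat 2 m) (hv2 : padicValNat 2 m < padicValNat 2 k)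
    (F : Type*) [Field F] [Fintype F] (hF : Fintype.card F = p ^ m) :
    Nat.card {t : F × F × F // t.1 ≠ 0 ∧
        (t.1 ^ (p ^ k - 1) * t.2.1 - t.2.1 ^ (p ^ k)) ^ 2
          + (t.1 ^ (p ^ k - 1) * t.2.2 - t.2.2 ^ (p ^ k)) ^ 2 = 0} =
      p ^ Nat.gcd m k * (2 * p ^ m - p ^ Nat.gcd m k) * (p ^ m - 1) := by
  have := Fact.mk hp
  have := charP_of_card_eq_prime_pow hF
  have hF' : Nat.card F = p ^ m := by rw [Nat.card_eq_fintype_card, hF]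
  have hm : Even m := even_iff_two_dvd.mpr (dvd_of_one_le_padicValNat hv1)
  have hk : Even k := even_iff_two_dvd.mpr (dvd_of_one_le_padicValNat (by omega))
  obtain ⟨i, hi, hiq⟩ := FiniteField.exists_sq_eq_neg_one_and_pow_eq_self hpo hF hm hk
  have h2 : (2 : F) ≠ 0 :=
    Ring.two_ne_zero (by rw [ringChar.eq F p]; rintro rfl; norm_num at hpo)
  have hker : {uv : F × F | subPowCharPow F p k uv.1 = 0 ∨ subPowCharPow F p k uv.2 = 0} =
      {uv | uv.1 ∈ {a : F | a ^ p ^ k = a} ∨ uv.2 ∈ {a : F | a ^ p ^ k = a}} := by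
    simp only [subPowCharPow_eq_zero_iff, Set.mem_ofPred_eq]
  rw [← Set.coe_ofPred, Nat.card_coe_set_eq]
  calc
    _ = (p ^ m - 1) *
          {uv : F × F | subPowCharPow F p k uv.1 = 0 ∨ subPowCharPow F p k uv.2 = 0}.ncard := by
      rw [setOf_sq_add_sq_eq_zero_eq_div_mem (pow_pos hp.pos k), ncard_setOf_ne_zero_and_div_mem,
        hF']
      exact congrArg _ ((subPowCharPow F p k).ncard_setOf_sq_add_sq_eq_zero hi h2
        (subPowCharPow_mul_of_pow_eq_self hiq))
    _ = (p ^ m - 1) * (p ^ m.gcd k * (2 * p ^ m - p ^ m.gcd k)) := by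
      rw [hker, Set.ncard_setOf_fst_mem_or_snd_mem,
        FiniteField.ncard_pow_prime_pow_eq_self hp.pos hF' k, hF']
    _ = _ := by ring

theorem stmt_9 (p m k : ℕ) (hp : p.Prime) (hpo : Odd p) (hm : 0 < m) (hk : 0 < k)
    (hv1 : 1 ≤ padicValNat 2 m) (hv2 : padicValNat 2 m < padicValNat 2 k)
    (F : Type*) [Field F] [Fintype F] (hF : Fintype.card F = p ^ m)
    (π : Fˣ) (hπ : ∀ x : Fˣ, x ∈ Subgroup.zpowers π) :
    Nat.card {t : F × F × F // t.1 ≠ 0 ∧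
        (t.1 ^ (p ^ k - 1) * t.2.1 - t.2.1 ^ (p ^ k)) ^ 2
          + (t.1 ^ (p ^ k - 1) * t.2.2 - t.2.2 ^ (p ^ k)) ^ 2 = 0} =
      p ^ Nat.gcd m k * (2 * p ^ m - p ^ Nat.gcd m k) * (p ^ m - 1) :=
  stmt_9_general p m k hp hpo hv1 hv2 F hF
end

section
/- Let p be an odd prime, m, k positive integers with d = gcd(m,k). If 1 ≤ v₂(m) < v₂(k), then p^d − 1 divides (p^k − 1)/2 but p^d − 1 does not divide (p^m − 1)/2. -/
/-!
With `d = gcd m k`, subtracting `v₂ d` from `v₂ m < v₂ k` gives `v₂ (m / d) < v₂ (k / d)`,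
so `k / d` is even and, the two quotients being coprime, `m / d` is odd.
For odd `x > 1` we have `x ^ n - 1 = (x - 1) (1 + x + ⋯ + x ^ (n - 1))`, and the geometric sum
has the parity of `n`; hence `x - 1 ∣ (x ^ n - 1) / 2` exactly when `n` is even.
Apply this to `x = p ^ d` with `n = k / d` and `n = m / d`.
-/

open Finset

namespace Nat

theorem dvd_div_gcd_of_padicValNat_lt {ℓ m k : ℕ} [Fact ℓ.Prime] (hm : m ≠ 0)
    (hv : padicValNat ℓ m < padicValNat ℓ k) : ℓ ∣ k / gcd m k := by
  have hk : k ≠ 0 := by rintro rfl; simp at hv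
  set d := gcd m k
  have hd : d ≠ 0 := gcd_ne_zero_left hm
  have hvm : padicValNat ℓ m = padicValNat ℓ d + padicValNat ℓ (m / d) := by
    rw [← padicValNat.mul hd ((div_ne_zero_iff_of_dvd (gcd_dvd_left m k)).2 ⟨hm, hd⟩),
      Nat.mul_div_cancel' (gcd_dvd_left m k)]
  have hvk : padicValNat ℓ k = padicValNat ℓ d + padicValNat ℓ (k / d) := by
    rw [← padicValNat.mul hd ((div_ne_zero_iff_of_dvd (gcd_dvd_right m k)).2 ⟨hk, hd⟩),
      Nat.mul_div_cancel' (gcd_dvd_right m k)]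
  exact dvd_of_one_le_padicValNat (by omega)

theorem not_dvd_div_gcd_of_padicValNat_lt {ℓ m k : ℕ} [hℓ : Fact ℓ.Prime] (hm : m ≠ 0)
    (hv : padicValNat ℓ m < padicValNat ℓ k) : ¬ ℓ ∣ m / gcd m k := fun hdvd =>
  hℓ.out.one_lt.ne' <| eq_one_of_dvd_coprimes
    (coprime_div_gcd_div_gcd (gcd_pos_of_pos_left k (pos_of_ne_zero hm)))
    hdvd (dvd_div_gcd_of_padicValNat_lt hm hv)

theorem even_geom_sum_iff {x : ℕ} (hx : Odd x) (n : ℕ) :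
    Even (∑ i ∈ range n, x ^ i) ↔ Even n := by
  rw [even_sum_iff_even_card_odd, filter_true_of_mem fun i _ => hx.pow, card_range]

theorem two_mul_sub_one_dvd_pow_sub_one_iff {x : ℕ} (hx : Odd x) (hx1 : 1 < x) (n : ℕ) :
    2 * (x - 1) ∣ x ^ n - 1 ↔ Even n := by
  rw [← geom_sum_mul_of_one_le hx1.le, Nat.mul_dvd_mul_iff_right (by omega), ← even_iff_two_dvd,
    even_geom_sum_iff hx]

theorem sub_one_dvd_pow_sub_one_div_two_iff {x : ℕ} (hx : Odd x) (hx1 : 1 < x) (n : ℕ) :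
    x - 1 ∣ (x ^ n - 1) / 2 ↔ Even n := by
  have hpow : 2 ∣ x ^ n - 1 := (Nat.Odd.sub_odd hx.pow odd_one).two_dvd
  rw [Nat.dvd_div_iff_mul_dvd hpow, two_mul_sub_one_dvd_pow_sub_one_iff hx hx1]

end Nat

theorem stmt_13_general (p m k : ℕ) (hp : p.Prime) (hpo : Odd p) (hm : 0 < m)
    (hv2 : padicValNat 2 m < padicValNat 2 k) :
    (p ^ Nat.gcd m k - 1) ∣ (p ^ k - 1) / 2 ∧
    ¬ (p ^ Nat.gcd m k - 1) ∣ (p ^ m - 1) / 2 := by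
  set d := Nat.gcd m k
  have hx : Odd (p ^ d) := hpo.pow
  have hx1 : 1 < p ^ d := Nat.one_lt_pow (Nat.gcd_pos_of_pos_left k hm).ne' hp.one_lt
  have hk : k = d * (k / d) := (Nat.mul_div_cancel' (Nat.gcd_dvd_right m k)).symm
  have hm' : m = d * (m / d) := (Nat.mul_div_cancel' (Nat.gcd_dvd_left m k)).symm
  constructor
  · rw [hk, pow_mul, Nat.sub_one_dvd_pow_sub_one_div_two_iff hx hx1, even_iff_two_dvd]
    exact Nat.dvd_div_gcd_of_padicValNat_lt hm.ne' hv2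
  · rw [hm', pow_mul, Nat.sub_one_dvd_pow_sub_one_div_two_iff hx hx1, even_iff_two_dvd]
    exact Nat.not_dvd_div_gcd_of_padicValNat_lt hm.ne' hv2

theorem stmt_13 (p m k : ℕ) (hp : p.Prime) (hpo : Odd p) (hm : 0 < m) (hk : 0 < k)
    (hv1 : 1 ≤ padicValNat 2 m) (hv2 : padicValNat 2 m < padicValNat 2 k) :
    (p ^ Nat.gcd m k - 1) ∣ (p ^ k - 1) / 2 ∧
    ¬ (p ^ Nat.gcd m k - 1) ∣ (p ^ m - 1) / 2 :=
  stmt_13_general p m k hp hpo hm hv2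
end

section
/- Let p be an odd prime, m, k positive integers, d = gcd(m,k), and α, β ∈ F_{p^m} with α ≠ 0. Define φ_{α,β}(x) = α^{p^k} x^{p^{2k}} + 2β^{p^k} x^{p^k} + αx. If 1 ≤ v₂(m) < v₂(k) or v₂(k) < v₂(m), and π is a primitive element of F_{p^m}, then φ_{α,β} and φ_{π^{(p^k+1)/2}α, −πβ} cannot both have a nonzero root in F_{p^m}. -/
/-!
Write `q = p ^ k = 2e + 1`. Eliminating `β` between `φ_{α,β}(x₁) = 0` and
`φ_{π^{e+1}α, -πβ}(x₂) = 0` (the `β`-terms cancel because `q` is odd) and using additivity of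
`x ↦ x ^ q`, one finds with `D = x₁ ^ (q-1) + π ^ e x₂ ^ (q-1)` that
`α ^ (q-1) D ^ q x₁ ^ (q-1) π ^ e x₂ ^ (q-1) = -D`. Whether `D = 0` or not, this exhibits `-π ^ e`
as a `(q-1)`-th power. But `-π ^ e = π ^ ((p^m-1)/2 + e)`, which in the cyclic group `F_{p^m}ˣ` is a
`(q-1)`-th power only if `gcd(p^m-1, p^k-1) = p^d-1` divides `(p^m-1)/2 + (p^k-1)/2`, i.e. only if
`m/d + k/d` is even; the condition `v₂(m) ≠ v₂(k)` makes `m/d + k/d` odd.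
-/

open Finset

theorem Nat.even_geom_sum_iff_s17 {a : ℕ} (ha : Odd a) (n : ℕ) :
    Even (∑ i ∈ range n, a ^ i) ↔ Even n := by
  rw [even_sum_iff_even_card_odd, filter_true_of_mem fun i _ ↦ ha.pow, card_range]

theorem Nat.sub_one_dvd_half_add_half_iff {a : ℕ} (ha : Odd a) (ha1 : 1 < a) (r s : ℕ) :
    a - 1 ∣ (a ^ r - 1) / 2 + (a ^ s - 1) / 2 ↔ Even (r + s) := by
  obtain ⟨E, rfl⟩ := ha
  have hE : 0 < E := by omega
  have half : ∀ n, ((2 * E + 1) ^ n - 1) / 2 = (∑ i ∈ range n, (2 * E + 1) ^ i) * E := by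
    intro n
    rw [← geom_sum_mul_add (2 * E) n, Nat.add_sub_cancel, mul_left_comm,
      Nat.mul_div_cancel_left _ two_pos]
  rw [half, half, ← add_mul, Nat.add_sub_cancel, Nat.mul_dvd_mul_iff_right hE, ← even_iff_two_dvd,
    Nat.even_add, Nat.even_add, even_geom_sum_iff_s17 ⟨E, rfl⟩, even_geom_sum_iff_s17 ⟨E, rfl⟩]

theorem Nat.odd_div_gcd_add_div_gcd {m k : ℕ} (hm : m ≠ 0) (hk : k ≠ 0)
    (hv : padicValNat 2 m ≠ padicValNat 2 k) : Odd (m / m.gcd k + k / m.gcd k) := by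
  set d := m.gcd k
  have hd : d ≠ 0 := Nat.gcd_ne_zero_left hm
  have hcop : (m / d).Coprime (k / d) := Nat.coprime_div_gcd_div_gcd (Nat.pos_of_ne_zero hd)
  have valuation_eq : ∀ n, d ∣ n → n ≠ 0 → Odd (n / d) → padicValNat 2 n = padicValNat 2 d := by
    intro n hdn hn hodd
    rw [← Nat.mul_div_cancel' hdn,
      padicValNat.mul hd (Nat.div_ne_zero_iff_of_dvd hdn |>.2 ⟨hn, hd⟩),
      padicValNat.eq_zero_of_not_dvd hodd.not_two_dvd_nat, add_zero]
  rcases Nat.even_or_odd (m / d) with hm' | hm' <;> rcases Nat.even_or_odd (k / d) with hk' | hk'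
  · have := Nat.dvd_gcd (even_iff_two_dvd.1 hm') (even_iff_two_dvd.1 hk')
    rw [hcop] at this
    omega
  · exact hm'.add_odd hk'
  · exact hm'.add_even hk'
  · exact absurd ((valuation_eq m (Nat.gcd_dvd_left m k) hm hm').trans
      (valuation_eq k (Nat.gcd_dvd_right m k) hk hk').symm) hv

theorem IsPrimitiveRoot.pow_eq_neg_one_of_two_mul {R : Type*} [CommRing R] [NoZeroDivisors R]
    {ζ : R} {c : ℕ} (h : IsPrimitiveRoot ζ (2 * c)) (hc : c ≠ 0) : ζ ^ c = -1 := by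
  have := h.pow_of_dvd hc (dvd_mul_left c 2)
  rw [Nat.mul_div_cancel _ (Nat.pos_of_ne_zero hc)] at this
  exact this.eq_neg_one_of_two_right

theorem gcd_orderOf_dvd_of_pow_eq_pow {G : Type*} [Group G] [Finite G] {g w : G}
    (hg : ∀ x : G, x ∈ Subgroup.zpowers g) {s a : ℕ} (h : w ^ s = g ^ a) :
    (orderOf g).gcd s ∣ a := by
  obtain ⟨j, rfl⟩ := mem_powers_iff_mem_zpowers.2 (hg w)
  rw [← pow_mul, pow_eq_pow_iff_modEq] at h
  exact (Nat.modEq_zero_iff_dvd.1 ((h.of_dvd (Nat.gcd_dvd_left _ _)).symm.trans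
    (Nat.modEq_zero_iff_dvd.2 ((Nat.gcd_dvd_right _ _).mul_left j))))

theorem FiniteField.pow_sub_one_ne_neg_pow_half {F : Type*} [Field F] [Fintype F] {p m k : ℕ}
    (hp : p.Prime) (hpo : Odd p) (hm : 0 < m) (hk : 0 < k)
    (hv : padicValNat 2 m ≠ padicValNat 2 k) (hF : Fintype.card F = p ^ m)
    {π : Fˣ} (hπ : ∀ x : Fˣ, x ∈ Subgroup.zpowers π) (v : F) :
    v ^ (p ^ k - 1) ≠ -(π : F) ^ ((p ^ k - 1) / 2) := by
  intro h
  have even_sub_one : ∀ n, Even (p ^ n - 1) := fun n ↦ Nat.Odd.sub_odd hpo.pow odd_one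
  have horder : orderOf π = 2 * ((p ^ m - 1) / 2) := by
    rw [orderOf_eq_card_of_forall_mem_zpowers hπ, Nat.card_units, Nat.card_eq_fintype_card, hF,
      Nat.two_mul_div_two_of_even (even_sub_one m)]
  have hc0 : (p ^ m - 1) / 2 ≠ 0 := by
    have := Nat.one_lt_pow hm.ne' hp.one_lt
    obtain ⟨r, hr⟩ := even_sub_one m
    omega
  have neg_one_eq : (π : F) ^ ((p ^ m - 1) / 2) = -1 :=
    (IsPrimitiveRoot.coe_units_iff.2 (horder ▸ IsPrimitiveRoot.orderOf π)).pow_eq_neg_one_of_two_mul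
      hc0
  have hv0 : v ≠ 0 := by
    rintro rfl
    rw [zero_pow (Nat.sub_ne_zero_of_lt (Nat.one_lt_pow hk.ne' hp.one_lt)), zero_eq_neg] at h
    exact pow_ne_zero _ π.ne_zero h
  have hpow : Units.mk0 v hv0 ^ (p ^ k - 1) = π ^ ((p ^ m - 1) / 2 + (p ^ k - 1) / 2) := by
    ext
    rw [Units.val_pow_eq_pow_val, Units.val_mk0, h, Units.val_pow_eq_pow_val, pow_add, neg_one_eq,
      neg_one_mul]
  have hdvd := gcd_orderOf_dvd_of_pow_eq_pow hπ hpow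
  rw [horder, Nat.two_mul_div_two_of_even (even_sub_one m), Nat.pow_sub_one_gcd_pow_sub_one] at hdvd
  have pow_eq : ∀ n, m.gcd k ∣ n → p ^ n = (p ^ m.gcd k) ^ (n / m.gcd k) := fun n hn ↦ by
    rw [← pow_mul, Nat.mul_div_cancel' hn]
  rw [pow_eq m (Nat.gcd_dvd_left m k), pow_eq k (Nat.gcd_dvd_right m k)] at hdvd
  refine (Nat.not_even_iff_odd.2 (Nat.odd_div_gcd_add_div_gcd hm.ne' hk.ne' hv))
    ((Nat.sub_one_dvd_half_add_half_iff hpo.pow ?_ _ _).1 hdvd)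
  exact Nat.one_lt_pow (Nat.gcd_pos_of_pos_left k hm).ne' hp.one_lt

/-- The paper's `φ_{α,β}`, with `q = p ^ k`. -/
def phi {F : Type*} [CommRing F] (q : ℕ) (α β x : F) : F :=
  α ^ q * x ^ (q * q) + 2 * β ^ q * x ^ q + α * x

section
variable {F : Type*} [Field F] {e : ℕ} {α β γ x₁ x₂ : F}

theorem eq_neg_of_phi_eq_zero
    (hfrob : ∀ a b : F, (a + b) ^ (2 * e + 1) = a ^ (2 * e + 1) + b ^ (2 * e + 1))
    (hγ : γ ≠ 0) (hα : α ≠ 0) (hx₁ : x₁ ≠ 0) (hx₂ : x₂ ≠ 0)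
    (h₁ : phi (2 * e + 1) α β x₁ = 0) (h₂ : phi (2 * e + 1) (γ ^ (e + 1) * α) (-γ * β) x₂ = 0) :
    α ^ (2 * e) * (x₁ ^ (2 * e) + γ ^ e * x₂ ^ (2 * e)) ^ (2 * e + 1) * x₁ ^ (2 * e) *
      (γ ^ e * x₂ ^ (2 * e)) = -(x₁ ^ (2 * e) + γ ^ e * x₂ ^ (2 * e)) := by
  have hneg : (-γ * β) ^ (2 * e + 1) = -(γ * β) ^ (2 * e + 1) := by
    rw [neg_mul, Odd.neg_pow ⟨e, rfl⟩]
  unfold phi at h₁ h₂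
  rw [hneg] at h₂
  have factored : (α ^ (2 * e) * (x₁ ^ (2 * e) + γ ^ e * x₂ ^ (2 * e)) ^ (2 * e + 1) *
      x₁ ^ (2 * e) * (γ ^ e * x₂ ^ (2 * e)) + (x₁ ^ (2 * e) + γ ^ e * x₂ ^ (2 * e))) *
      (γ ^ (e + 1) * α * x₁ * x₂) = 0 := by
    linear_combination (γ ^ (2 * e + 1) * x₂ ^ (2 * e + 1)) * h₁ + x₁ ^ (2 * e + 1) * h₂ +
      (α ^ (2 * e) * x₁ ^ (2 * e) * (γ ^ e * x₂ ^ (2 * e)) * (γ ^ (e + 1) * α * x₁ * x₂)) *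
        hfrob (x₁ ^ (2 * e)) (γ ^ e * x₂ ^ (2 * e))
  have hne : γ ^ (e + 1) * α * x₁ * x₂ ≠ 0 :=
    mul_ne_zero (mul_ne_zero (mul_ne_zero (pow_ne_zero _ hγ) hα) hx₁) hx₂
  exact eq_neg_of_add_eq_zero_left ((mul_eq_zero.1 factored).resolve_right hne)

theorem exists_pow_eq_neg_pow_of_phi_eq_zero
    (hfrob : ∀ a b : F, (a + b) ^ (2 * e + 1) = a ^ (2 * e + 1) + b ^ (2 * e + 1))
    (hγ : γ ≠ 0) (hα : α ≠ 0) (hx₁ : x₁ ≠ 0) (hx₂ : x₂ ≠ 0)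
    (h₁ : phi (2 * e + 1) α β x₁ = 0) (h₂ : phi (2 * e + 1) (γ ^ (e + 1) * α) (-γ * β) x₂ = 0) :
    ∃ v : F, v ^ (2 * e) = -γ ^ e := by
  have hD := eq_neg_of_phi_eq_zero hfrob hγ hα hx₁ hx₂ h₁ h₂
  generalize hDdef : x₁ ^ (2 * e) + γ ^ e * x₂ ^ (2 * e) = D at hD
  by_cases hD0 : D = 0
  · refine ⟨x₁ / x₂, ?_⟩
    rw [div_pow, div_eq_iff (pow_ne_zero _ hx₂)]
    linear_combination hDdef + hD0
  · refine ⟨(α * x₁ * x₂ * D)⁻¹, ?_⟩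
    have hprod : (α * x₁ * x₂ * D) ^ (2 * e) * γ ^ e = -1 :=
      mul_right_cancel₀ hD0 (by simp only [mul_pow]; linear_combination hD)
    rw [inv_pow, inv_eq_of_mul_eq_one_left (a := -γ ^ e) (by linear_combination -hprod)]
end

theorem stmt_17 (p m k : ℕ) (hp : p.Prime) (hpo : Odd p) (hm : 0 < m) (hk : 0 < k)
    (hv : (1 ≤ padicValNat 2 m ∧ padicValNat 2 m < padicValNat 2 k) ∨
          padicValNat 2 k < padicValNat 2 m)
    (F : Type*) [Field F] [Fintype F] (hF : Fintype.card F = p ^ m)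
    (π : Fˣ) (hπ : ∀ x : Fˣ, x ∈ Subgroup.zpowers π)
    (α β : F) (hα : α ≠ 0) :
    ¬ ((∃ x : F, x ≠ 0 ∧
          α ^ (p ^ k) * x ^ (p ^ (2 * k)) + 2 * β ^ (p ^ k) * x ^ (p ^ k) + α * x = 0) ∧
       (∃ x : F, x ≠ 0 ∧
          ((π : F) ^ ((p ^ k + 1) / 2) * α) ^ (p ^ k) * x ^ (p ^ (2 * k))
            + 2 * (-(π : F) * β) ^ (p ^ k) * x ^ (p ^ k)
            + (π : F) ^ ((p ^ k + 1) / 2) * α * x = 0)) := by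
  rintro ⟨⟨x₁, hx₁, h₁⟩, x₂, hx₂, h₂⟩
  have := Fact.mk hp
  have : CharP F p := charP_of_card_eq_prime_pow hF
  obtain ⟨e, he⟩ := hpo.pow (n := k)
  have hfrob : ∀ a b : F, (a + b) ^ (2 * e + 1) = a ^ (2 * e + 1) + b ^ (2 * e + 1) := by
    rw [← he]
    exact fun a b ↦ add_pow_char_pow a b p k
  have hsq : p ^ (2 * k) = p ^ k * p ^ k := by rw [two_mul, pow_add]
  have hhalf : (p ^ k + 1) / 2 = e + 1 := by omega
  rw [hsq, he] at h₁
  rw [hsq, hhalf, he] at h₂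
  obtain ⟨v, hroot⟩ := exists_pow_eq_neg_pow_of_phi_eq_zero hfrob π.ne_zero hα hx₁ hx₂ h₁ h₂
  refine FiniteField.pow_sub_one_ne_neg_pow_half hp hpo hm hk (by omega) hF hπ v ?_
  rwa [he, Nat.add_sub_cancel, Nat.mul_div_cancel_left _ two_pos]
end
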